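/- arXiv:2605.17736 — 3 statements merged into one kernel-verified Lean document; each statement's English description precedes it below -/
import Mathlib

section
/- Let R be an integral domain, C an exact complex of finitely generated free R-modules, p ∈ R, and C^p the mapping cone of the multiplication-by-p chain endomorphism μ_p : C → C. Then for all n, rank ∂^{C^p}_n = rank C_{n-1}, where rank of a map is computed over the fraction field. -/
open CategoryTheory

universe u

noncomputable local instance : DecidableRel (ComplexShape.down ℤ).Rel := fun _ _ => by
  dsimp [ComplexShape.down]; infer_instance

local instance {R : Type u} [CommRing R] {C D : ChainComplex (ModuleCat.{u} R) ℤ}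
    (f : C ⟶ D) : HomologicalComplex.HasHomotopyCofiber f :=
  ⟨fun _ _ _ => inferInstance⟩

/-- For an integral domain `R` with fraction field `K`, the rank of an `R`-linear map
`f`: the `K`-dimension of the image of `K ⊗_R f`. -/
noncomputable def franK {R : Type u} [CommRing R] [IsDomain R]
    {M N : Type u} [AddCommGroup M] [Module R M] [AddCommGroup N] [Module R N]
    (f : M →ₗ[R] N) : ℕ :=
  Module.finrank (FractionRing R)
    (LinearMap.range (LinearMap.baseChange (FractionRing R) f))

/-! Under the identification of the cone with `C_{n-1} × C_n`, its differential is
`(a, b) ↦ (-∂a, p a + ∂b)`. Over the fraction field `K`, when `p ≠ 0` the pair `(a, b)` has the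
same image as `(a + p⁻¹ ∂b, 0)` because `∂∂ = 0`, and `a ↦ (-∂a, p a)` is injective, so the image
is a copy of `K ⊗ C_{n-1}`. When `p = 0` the differential is `(-∂) × ∂`, whose rank is
`rank ∂_{n-1} + rank ∂_n = dim (K ⊗ C_{n-1})` by exactness, which survives the flat base change
to `K`. Finally `dim_K (K ⊗ C_{n-1})` is the rank of `C_{n-1}` over `R`. -/

open TensorProduct Module

universe v

namespace LinearMap

section

variable {R : Type*} [Ring R] {M M' N N' : Type*} [AddCommGroup M] [Module R M]
  [AddCommGroup M'] [Module R M'] [AddCommGroup N] [Module R N] [AddCommGroup N'] [Module R N']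

/-- The differential of the mapping cone of a chain map with component `f`, from source
differential `dF` and target differential `dG`. -/
def coneDifferential (dF : M →ₗ[R] M') (f : M →ₗ[R] N') (dG : N →ₗ[R] N') :
    M × N →ₗ[R] M' × N' :=
  ((-dF) ∘ₗ fst R M N).prod (f.coprod dG)

@[simp]
lemma coneDifferential_apply (dF : M →ₗ[R] M') (f : M →ₗ[R] N') (dG : N →ₗ[R] N') (x : M × N) :
    coneDifferential dF f dG x = (-dF x.1, f x.1 + dG x.2) :=
  rfl

end

lemma baseChange_coneDifferential {R : Type*} [CommRing R] {M M' N N' : Type*}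
    [AddCommGroup M] [Module R M] [AddCommGroup M'] [Module R M']
    [AddCommGroup N] [Module R N] [AddCommGroup N'] [Module R N']
    (dF : M →ₗ[R] M') (f : M →ₗ[R] N') (dG : N →ₗ[R] N') (A : Type*) [CommRing A] [Algebra R A] :
    (coneDifferential dF f dG).baseChange A =
      (prodRight R A A M' N').symm.toLinearMap ∘ₗ
        coneDifferential (dF.baseChange A) (f.baseChange A) (dG.baseChange A) ∘ₗ
          (prodRight R A A M N).toLinearMap := by
  ext <;> simp [LinearEquiv.eq_symm_apply, tmul_neg]

lemma finrank_range_equiv_comp_comp {R : Type*} [Ring R] {M M' N N' : Type*}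
    [AddCommGroup M] [Module R M] [AddCommGroup M'] [Module R M']
    [AddCommGroup N] [Module R N] [AddCommGroup N'] [Module R N']
    (e : M' ≃ₗ[R] M) (f : M →ₗ[R] N) (e' : N ≃ₗ[R] N') :
    finrank R (range (e'.toLinearMap ∘ₗ f ∘ₗ e.toLinearMap)) = finrank R (range f) := by
  rw [range_comp, range_comp, LinearEquiv.range, Submodule.map_top, LinearEquiv.finrank_map_eq]

end LinearMap

namespace HomologicalComplex

namespace homotopyCofiber

lemma fstX_inlX_add_sndX_inrX {C : Type*} [Category C] [Preadditive C] {ι : Type*}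
    {c : ComplexShape ι} [DecidableRel c.Rel] {F G : HomologicalComplex C c} (φ : F ⟶ G)
    [HasHomotopyCofiber φ] (i j : ι) (hij : c.Rel i j) :
    fstX φ i j hij ≫ inlX φ j i hij + sndX φ i ≫ inrX φ i = 𝟙 _ := by
  apply ext_to_X φ i j hij <;> simp

end homotopyCofiber

variable {R : Type*} [Ring R] {ι : Type*} {c : ComplexShape ι}

section

variable [DecidableRel c.Rel] {F G : HomologicalComplex (ModuleCat R) c} (φ : F ⟶ G)
  [HasHomotopyCofiber φ]

open homotopyCofiber

noncomputable def homotopyCofiber.XLinearEquivProd (i j : ι) (hij : c.Rel i j) :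
    (homotopyCofiber φ).X i ≃ₗ[R] F.X j × G.X i :=
  LinearEquiv.ofLinearMap ((fstX φ i j hij).hom.prod (sndX φ i).hom)
    ((inlX φ j i hij).hom.coprod (inrX φ i).hom)
    (by ext x <;> simp [← ModuleCat.comp_apply])
    (by ext x; simpa using congr($(fstX_inlX_add_sndX_inrX φ i j hij).hom x))

lemma homotopyCofiber_d_hom_eq_coneDifferential (i j k : ι) (hij : c.Rel i j) (hjk : c.Rel j k) :
    ((homotopyCofiber φ).d i j).hom =
      (XLinearEquivProd φ j k hjk).symm.toLinearMap ∘ₗ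
        (F.d j k).hom.coneDifferential (φ.f j).hom (G.d i j).hom ∘ₗ
          (XLinearEquivProd φ i j hij).toLinearMap := by
  ext x : 1
  rw [LinearMap.comp_apply, LinearMap.comp_apply, LinearEquiv.coe_coe, LinearEquiv.coe_coe,
    LinearEquiv.eq_symm_apply]
  ext
  · exact congr($(d_fstX φ i j k hij hjk).hom x)
  · exact congr($(d_sndX φ i j hij).hom x)

end

lemma ExactAt.exact_hom_d {K : HomologicalComplex (ModuleCat R) c} {i j k : ι} (h : K.ExactAt j)
    (hij : c.Rel i j) (hjk : c.Rel j k) : Function.Exact (K.d i j).hom (K.d j k).hom := by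
  rw [K.exactAt_iff' i j k (c.prev_eq' hij) (c.next_eq' hjk)] at h
  exact (ShortComplex.ShortExact.moduleCat_exact_iff_function_exact _).1 h

end HomologicalComplex

lemma Submodule.rank_prod {K : Type*} [DivisionRing K] {V W : Type v} [AddCommGroup V] [Module K V]
    [AddCommGroup W] [Module K W] (p : Submodule K V) (q : Submodule K W) :
    Module.rank K (p.prod q) = Module.rank K p + Module.rank K q := by
  rw [← rank_prod', ← rank_range_of_injective (p.subtype.prodMap q.subtype)
    (Prod.map_injective.2 ⟨p.injective_subtype, q.injective_subtype⟩),
    LinearMap.range_prodMap, Submodule.range_subtype, Submodule.range_subtype]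

namespace LinearMap

variable {K : Type*} [Field K] {V₀ V₁ V₂ : Type v} [AddCommGroup V₀] [Module K V₀]
  [AddCommGroup V₁] [Module K V₁] [AddCommGroup V₂] [Module K V₂]
  {δ₀ : V₀ →ₗ[K] V₁} {δ₁ : V₁ →ₗ[K] V₂}

lemma coneDifferential_zero : coneDifferential δ₁ 0 δ₀ = prodMap (-δ₁) δ₀ := by
  ext <;> simp

lemma range_coneDifferential_smul_id_eq_range_comp_inl (h : Function.Exact δ₀ δ₁) {q : K}
    (hq : q ≠ 0) :
    range (coneDifferential δ₁ (q • id) δ₀) =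
      range (coneDifferential δ₁ (q • id) δ₀ ∘ₗ inl K V₁ V₀) := by
  refine le_antisymm ?_ (range_comp_le_range _ _)
  rintro _ ⟨⟨a, b⟩, rfl⟩
  exact ⟨a + q⁻¹ • δ₀ b, by simp [h.apply_apply_eq_zero, smul_smul, hq]⟩

lemma rank_range_coneDifferential_smul_id (h : Function.Exact δ₀ δ₁) (q : K) :
    Module.rank K (range (coneDifferential δ₁ (q • id) δ₀)) = Module.rank K V₁ := by
  rcases eq_or_ne q 0 with rfl | hq
  · rw [zero_smul, coneDifferential_zero, range_prodMap, Submodule.rank_prod, range_neg,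
      ← h.linearMap_ker_eq, rank_range_add_rank_ker]
  · rw [range_coneDifferential_smul_id_eq_range_comp_inl h hq]
    exact rank_range_of_injective _ fun a b hab => by simpa [hq] using congrArg Prod.snd hab

end LinearMap

section franK

variable {R : Type u} [CommRing R] [IsDomain R]

lemma franK_equiv_comp_comp {M M' N N' : Type u}
    [AddCommGroup M] [Module R M] [AddCommGroup M'] [Module R M']
    [AddCommGroup N] [Module R N] [AddCommGroup N'] [Module R N']
    (e : M' ≃ₗ[R] M) (f : M →ₗ[R] N) (e' : N ≃ₗ[R] N') :
    franK (e'.toLinearMap ∘ₗ f ∘ₗ e.toLinearMap) = franK f := by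
  rw [franK, LinearMap.baseChange_comp, LinearMap.baseChange_comp, ← LinearEquiv.coe_baseChange,
    ← LinearEquiv.coe_baseChange, LinearMap.finrank_range_equiv_comp_comp, franK]

lemma franK_coneDifferential_smul_id {M₀ M₁ M₂ : Type u} [AddCommGroup M₀] [Module R M₀]
    [AddCommGroup M₁] [Module R M₁] [AddCommGroup M₂] [Module R M₂]
    {d₀ : M₀ →ₗ[R] M₁} {d₁ : M₁ →ₗ[R] M₂} (h : Function.Exact d₀ d₁) (p : R) :
    franK (d₁.coneDifferential (p • LinearMap.id) d₀) = finrank R M₁ := by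
  have hK : Function.Exact (d₀.baseChange (FractionRing R)) (d₁.baseChange (FractionRing R)) :=
    Module.Flat.lTensor_exact _ h
  rw [franK, LinearMap.baseChange_coneDifferential, LinearMap.finrank_range_equiv_comp_comp,
    LinearMap.baseChange_smul, LinearMap.baseChange_id, ← algebraMap_smul (FractionRing R) p,
    finrank, LinearMap.rank_range_coneDifferential_smul_id hK, ← finrank,
    (TensorProduct.isBaseChange R M₁ (FractionRing R)).finrank_eq]

end franK

theorem rank_cone_differential_general
    {R : Type u} [CommRing R] [IsDomain R]
    (C : ChainComplex (ModuleCat.{u} R) ℤ)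
    (hexact : ∀ n : ℤ, C.ExactAt n)
    (p : R) :
    ∀ n : ℤ,
      franK (((HomologicalComplex.homotopyCofiber (p • 𝟙 C)).d n (n - 1)).hom : _ →ₗ[R] _) =
        Module.finrank R (C.X (n - 1)) := by
  intro n
  have h₁ : (ComplexShape.down ℤ).Rel n (n - 1) := by simp
  have h₂ : (ComplexShape.down ℤ).Rel (n - 1) (n - 1 - 1) := by simp
  rw [HomologicalComplex.homotopyCofiber_d_hom_eq_coneDifferential _ n (n - 1) (n - 1 - 1) h₁ h₂,
    franK_equiv_comp_comp]
  exact franK_coneDifferential_smul_id ((hexact (n - 1)).exact_hom_d h₁ h₂) p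

/-- Let `R` be an integral domain, `C` an exact complex of finitely generated free
`R`-modules, `p ∈ R`, and `C^p` the mapping cone of the multiplication-by-`p` chain
endomorphism `μ_p : C → C`.  Then for all `n`, `rank ∂^{C^p}ₙ = rank C_{n-1}`, the
rank of a map being computed over the fraction field. -/
theorem rank_cone_differential
    {R : Type u} [CommRing R] [IsDomain R]
    (C : ChainComplex (ModuleCat.{u} R) ℤ)
    (hfree : ∀ n : ℤ, Module.Free R (C.X n))
    (hfin : ∀ n : ℤ, Module.Finite R (C.X n))
    (hexact : ∀ n : ℤ, C.ExactAt n)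
    (p : R) :
    ∀ n : ℤ,
      franK (((HomologicalComplex.homotopyCofiber (p • 𝟙 C)).d n (n - 1)).hom : _ →ₗ[R] _) =
        Module.finrank R (C.X (n - 1)) :=
  rank_cone_differential_general C hexact p
end

section
/- Let Q be a regular local ring with maximal ideal n, f₁,…,f_c a regular sequence in Q (c ≥ 2), R = Q[x₁,…,x_c]/(f₁x₁+⋯+f_cx_c) the generic hypersurface, and a₁,…,a_c ∈ Q with at least one aᵢ a unit. Then x₁−a₁,…,x_c−a_c is a regular sequence in R, and R/(x₁−a₁,…,x_c−a_c) ≅ Q/(a₁f₁+⋯+a_cf_c). -/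
/-!
Write `w = Σ fᵢXᵢ`, `ηᵢ = Xᵢ - aᵢ`, and let `σ_S` substitute `aᵢ` for `Xᵢ` for the indices
`i ∈ S`. Since `p - σ_S p ∈ (ηᵢ : i ∈ S)` and `σ_S` kills these generators,
`p ∈ (w) + (ηᵢ : i ∈ S)` iff `σ_S p ∈ (σ_S w)`. So `η_k` is regular modulo `(w, η₁, …, η_{k-1})`
once it is regular modulo the single polynomial `g = σ_{<k} w`, and this holds when `σ_{≤k} w` is
a nonzerodivisor: from `η_k p = g q`, substituting `X_k = a_k` gives `σ_{≤k} w · σ_{k} q = 0`, so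
`η_k ∣ q` and the nonzerodivisor `η_k` cancels. For `k < c`, `σ_{≤k} w` is linear in `X_c` with
leading coefficient `f_c`; for `k = c` it is the constant `Σ aᵢfᵢ`. Both are nonzerodivisors
because a regular sequence in a Noetherian local ring may be permuted: with some `f_j`, `a_j` a
unit, put last, `Σ aᵢfᵢ ≡ a_j f_j` is regular modulo the other `fᵢ`. Substituting all variables
identifies the final quotient with `Q/(Σ aᵢfᵢ)`, which is nonzero since `Σ aᵢfᵢ` lies in the
maximal ideal.
-/

set_option synthInstance.maxHeartbeats 1000000
set_option maxHeartbeats 1000000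
open IsLocalRing MvPolynomial

/-- A regular local ring: a commutative Noetherian local ring whose Krull dimension
equals the dimension of its cotangent space `n/n²` over the residue field. -/
def IsRegularLocal (Q : Type*) [CommRing Q] [IsLocalRing Q] [IsNoetherianRing Q] : Prop :=
  ringKrullDim Q =
    (Module.finrank (ResidueField Q) (CotangentSpace Q) : WithBot (WithTop ℕ))

open scoped nonZeroDivisors

theorem IsSMulRegular.mem_nonZeroDivisors {R : Type*} [CommMonoidWithZero R] {r : R}
    (h : IsSMulRegular R r) : r ∈ R⁰ :=
  nonZeroDivisorsLeft_eq_nonZeroDivisors (M₀ := R) ▸ h.isLeftRegular.mem_nonZeroDivisorsLeft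

theorem List.ofFn_perm_cons_succAbove {α : Type*} {m : ℕ} (f : Fin (m + 1) → α)
    (j : Fin (m + 1)) :
    (List.ofFn f).Perm (f j :: List.ofFn fun i => f (j.succAbove i)) := by
  have := (Equiv.Perm.ofFn_comp_perm j.cycleRange.symm f).symm
  rw [List.ofFn_succ (f := f ∘ _)] at this
  simpa only [Function.comp_apply, Fin.cycleRange_symm_zero, Fin.cycleRange_symm_succ] using this

theorem Ideal.ofList_ofFn {A : Type*} [Semiring A] {c : ℕ} (g : Fin c → A) :
    Ideal.ofList (List.ofFn g) = Ideal.span (Set.range g) :=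
  congrArg Ideal.span (Set.ext fun _ => List.mem_ofFn)

theorem Ideal.ofList_take_ofFn {A : Type*} [Semiring A] {c : ℕ} (g : Fin c → A) (n : ℕ) :
    Ideal.ofList ((List.ofFn g).take n) = Ideal.span (g '' {i | (i : ℕ) < n}) := by
  refine congrArg Ideal.span (Set.ext fun r => ?_)
  simp only [Set.mem_ofPred_eq, List.mem_take_iff_getElem, List.length_ofFn, List.getElem_ofFn,
    Set.mem_image]
  exact ⟨fun ⟨i, hi, h⟩ => ⟨⟨i, by omega⟩, by change i < n; omega, h⟩,
    fun ⟨i, hi, h⟩ => ⟨i, by omega, h⟩⟩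

theorem Ideal.mem_sup_iff_apply_mem_map {A : Type*} [Ring A] {φ : A →+* A} {I J : Ideal A}
    (hJ : J ≤ RingHom.ker φ) (hφ : ∀ x, x - φ x ∈ J) {x : A} :
    x ∈ I ⊔ J ↔ φ x ∈ I.map φ := by
  constructor
  · intro hx
    simpa [Ideal.map_sup, (Ideal.map_eq_bot_iff_le_ker φ).mpr hJ] using Ideal.mem_map_of_mem φ hx
  · intro hx
    have hmap : I.map φ ≤ I ⊔ J := Ideal.map_le_iff_le_comap.mpr fun y hy => by
      simpa using sub_mem (Ideal.mem_sup_left hy) (Ideal.mem_sup_right (hφ y))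
    simpa using add_mem (Ideal.mem_sup_right (hφ x)) (hmap hx)

namespace RingTheory.Sequence

theorem isWeaklyRegular_map_mk_iff {A : Type*} [CommRing A] (I : Ideal A) (rs : List A) :
    IsWeaklyRegular (A ⧸ I) (rs.map (Ideal.Quotient.mk I)) ↔
      ∀ i (h : i < rs.length) (p : A),
        rs[i] * p ∈ I ⊔ Ideal.ofList (rs.take i) → p ∈ I ⊔ Ideal.ofList (rs.take i) := by
  simp only [isWeaklyRegular_iff, List.length_map, List.getElem_map, ← List.map_take,
    ← Ideal.map_ofList, Ideal.mul_top, isSMulRegular_quotient_iff_mem_of_smul_mem,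
    Ideal.Quotient.mk_surjective.forall, smul_eq_mul, ← map_mul, Ideal.mem_quotient_iff_mem_sup,
    sup_comm]

variable {Q : Type*} [CommRing Q] [IsLocalRing Q]

theorem IsRegular.ofList_le_maximalIdeal {rs : List Q} (h : IsRegular Q rs) :
    Ideal.ofList rs ≤ maximalIdeal Q :=
  le_maximalIdeal fun htop => h.top_ne_smul (by rw [htop, Submodule.top_smul])

variable [IsNoetherianRing Q]

theorem IsRegular.isSMulRegular_of_mem {rs : List Q} (h : IsRegular Q rs) {r : Q} (hr : r ∈ rs) :
    IsSMulRegular Q r := by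
  classical
  exact ((isRegular_cons_iff _ _ _).mp
    (IsLocalRing.isRegular_of_perm h (List.perm_cons_erase hr))).1

theorem isSMulRegular_of_isRegular_cons_of_sub_mul_mem {x y u : Q} {t : List Q}
    (h : IsRegular Q (x :: t)) (hu : IsUnit u) (hy : y - u * x ∈ Ideal.ofList t) :
    IsSMulRegular Q y := by
  have hmax := h.ofList_le_maximalIdeal
  obtain ⟨ht, hx⟩ := (isWeaklyRegular_append_iff Q t [x]).mp
    (IsLocalRing.isRegular_of_perm h (List.perm_append_singleton x t).symm).toIsWeaklyRegular
  have hN : (Ideal.ofList t • ⊤ : Submodule Q Q) = Ideal.ofList t := by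
    rw [Ideal.smul_eq_mul, Ideal.mul_top]
  rw [isWeaklyRegular_singleton_iff, isSMulRegular_quotient_iff_mem_of_smul_mem, hN] at hx
  have hyt : IsSMulRegular (Q ⧸ (Ideal.ofList t • ⊤ : Submodule Q Q)) y := by
    rw [isSMulRegular_quotient_iff_mem_of_smul_mem, hN]
    intro z hz
    -- on `Q ⧸ (t)`, `y` acts as the unit multiple `u * x` of the regular element `x`
    have hxz : x • (u * z) ∈ Ideal.ofList t := by
      convert sub_mem hz (Ideal.mul_mem_right z _ hy) using 1
      simp only [smul_eq_mul]
      ring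
    simpa [← mul_assoc] using Ideal.mul_mem_left _ (↑hu.unit⁻¹ : Q) (hx _ hxz)
  have hmem : ∀ r ∈ t ++ [y], r ∈ maximalIdeal Q := by
    have hxt : Ideal.ofList t ≤ Ideal.ofList (x :: t) :=
      Ideal.span_mono fun r hr => List.mem_cons_of_mem x hr
    simp only [List.mem_append, List.mem_singleton]
    rintro r (hr | rfl)
    · exact hmax (hxt (Ideal.subset_span hr))
    · rw [← sub_add_cancel r (u * x)]
      exact add_mem (hmax (hxt hy))
        (Ideal.mul_mem_left _ u (hmax (Ideal.subset_span List.mem_cons_self)))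
  have := IsLocalRing.isWeaklyRegular_of_perm_of_subset_maximalIdeal
    ((isWeaklyRegular_append_iff Q t [y]).mpr ⟨ht, (isWeaklyRegular_singleton_iff _ _).mpr hyt⟩)
    (List.perm_append_singleton y t) hmem
  exact ((isWeaklyRegular_cons_iff _ _ _).mp this).1

theorem isSMulRegular_sum_mul_of_isRegular_ofFn {m : ℕ} {f a : Fin (m + 1) → Q}
    (hf : IsRegular Q (List.ofFn f)) {j : Fin (m + 1)} (hj : IsUnit (a j)) :
    IsSMulRegular Q (∑ i, a i * f i) := by
  refine isSMulRegular_of_isRegular_cons_of_sub_mul_mem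
    (IsLocalRing.isRegular_of_perm hf (List.ofFn_perm_cons_succAbove f j)) hj ?_
  rw [Fin.sum_univ_succAbove _ j, add_sub_cancel_left]
  exact Ideal.sum_mem _ fun i _ =>
    Ideal.mul_mem_left _ _ (Ideal.subset_span (List.mem_ofFn.mpr ⟨i, rfl⟩))

end RingTheory.Sequence

namespace MvPolynomial

variable {R σ : Type*} [CommRing R]

theorem C_mem_nonZeroDivisors {r : R} (hr : r ∈ R⁰) :
    (C r : MvPolynomial σ R) ∈ (MvPolynomial σ R)⁰ := by
  refine mem_nonZeroDivisors_iff_left.mpr fun p hp => ?_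
  ext m
  simpa using hr.1 _ (by simpa [coeff_C_mul] using congr(coeff m $hp))

theorem C_mul_X_add_mem_nonZeroDivisors (j : σ) {r : R} (hr : r ∈ R⁰) {v : MvPolynomial σ R}
    (hv : degreeOf j v = 0) : C r * X j + v ∈ (MvPolynomial σ R)⁰ := by
  classical
  let e : MvPolynomial σ R ≃+* Polynomial (MvPolynomial {b // b ≠ j} R) :=
    ((renameEquiv R (Equiv.optionSubtypeNe j).symm).trans (optionEquivLeft R _)).toRingEquiv
  obtain ⟨v', hv'⟩ : ∃ v', Polynomial.C v' = e v :=
    Polynomial.natDegree_eq_zero.mp ((degreeOf_eq_natDegree j v).symm.trans hv)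
  refine mem_nonZeroDivisors_of_injective e.injective
    (Polynomial.mem_nonzeroDivisors_of_coeff_mem 1 ?_)
  have he : e (C r * X j + v) = Polynomial.C (C r) * Polynomial.X + Polynomial.C v' := by
    rw [map_add, hv']
    simp [e]
  rw [he]
  simpa using C_mem_nonZeroDivisors hr

theorem X_sub_C_mem_nonZeroDivisors (j : σ) (r : R) : X j - C r ∈ (MvPolynomial σ R)⁰ := by
  simpa [sub_eq_add_neg] using
    C_mul_X_add_mem_nonZeroDivisors j (one_mem R⁰) (v := C (-r)) (degreeOf_C _ _)

variable (a : σ → R)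

open Classical in
noncomputable def substOn (S : Set σ) : MvPolynomial σ R →ₐ[R] MvPolynomial σ R :=
  aeval fun i => if i ∈ S then C (a i) else X i

variable {a}

@[simp]
theorem substOn_C (S : Set σ) (r : R) : substOn a S (C r) = C r := by
  simp [substOn]

theorem substOn_X_of_mem {S : Set σ} {i : σ} (hi : i ∈ S) : substOn a S (X i) = C (a i) := by
  simp [substOn, hi]

theorem substOn_X_of_notMem {S : Set σ} {i : σ} (hi : i ∉ S) : substOn a S (X i) = X i := by
  simp [substOn, hi]

theorem substOn_X_sub_C_of_mem {S : Set σ} {i : σ} (hi : i ∈ S) :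
    substOn a S (X i - C (a i)) = 0 := by
  rw [map_sub, substOn_X_of_mem hi, substOn_C, sub_self]

variable (a)

theorem sub_substOn_mem_span (S : Set σ) (p : MvPolynomial σ R) :
    p - substOn a S p ∈ Ideal.span ((fun i => X i - C (a i)) '' S) := by
  induction p using MvPolynomial.induction_on with
  | C r => simp
  | add p q hp hq => simpa [add_sub_add_comm] using add_mem hp hq
  | mul_X p i hp =>
    have hsplit : p * X i - substOn a S (p * X i)
        = (p - substOn a S p) * X i + substOn a S p * (X i - substOn a S (X i)) := by
      rw [map_mul]; ring
    rw [hsplit]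
    refine add_mem (Ideal.mul_mem_right _ _ hp) (Ideal.mul_mem_left _ _ ?_)
    by_cases hi : i ∈ S
    · rw [substOn_X_of_mem hi]
      exact Ideal.subset_span ⟨i, hi, rfl⟩
    · simp [substOn_X_of_notMem hi]

theorem substOn_singleton_substOn {k : σ} (S : Set σ) (p : MvPolynomial σ R) :
    substOn a {k} (substOn a S p) = substOn a (insert k S) p := by
  rw [← AlgHom.comp_apply]
  congr 1
  ext i
  by_cases hiS : i ∈ S
  · simp [substOn_X_of_mem hiS, substOn_X_of_mem (Set.mem_insert_of_mem k hiS)]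
  by_cases hik : i = k
  · subst hik
    simp [substOn_X_of_notMem hiS, substOn_X_of_mem (Set.mem_singleton i),
      substOn_X_of_mem (Set.mem_insert i S)]
  · simp [substOn_X_of_notMem hiS, substOn_X_of_notMem (show i ∉ ({k} : Set σ) from hik),
      substOn_X_of_notMem (show i ∉ insert k S by simp [hik, hiS])]

theorem substOn_univ (p : MvPolynomial σ R) : substOn a Set.univ p = C (eval a p) := by
  induction p using MvPolynomial.induction_on with
  | C r => simp
  | add p q hp hq => simp [hp, hq]
  | mul_X p i hp => simp [hp, substOn_X_of_mem (Set.mem_univ i)]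

theorem mem_span_singleton_of_X_sub_C_mul_mem {k : σ} {g : MvPolynomial σ R}
    (hg : substOn a {k} g ∈ (MvPolynomial σ R)⁰) {p : MvPolynomial σ R}
    (h : (X k - C (a k)) * p ∈ Ideal.span {g}) : p ∈ Ideal.span {g} := by
  obtain ⟨q, hq⟩ := Ideal.mem_span_singleton'.mp h
  have hq0 : substOn a {k} q = 0 := by
    refine (mem_nonZeroDivisors_iff_right.mp hg) _ ?_
    simpa [substOn_X_sub_C_of_mem (Set.mem_singleton k)] using congr(substOn a {k} $hq)
  obtain ⟨q', rfl⟩ : X k - C (a k) ∣ q := by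
    simpa [hq0, ← Ideal.mem_span_singleton] using sub_substOn_mem_span a {k} q
  refine Ideal.mem_span_singleton'.mpr ⟨q', ?_⟩
  refine sub_eq_zero.mp
    ((mem_nonZeroDivisors_iff_left.mp (X_sub_C_mem_nonZeroDivisors k (a k))) _ ?_)
  rw [mul_sub, ← hq]
  ring

theorem mem_sup_of_X_sub_C_mul_mem {S : Set σ} {k : σ} (hk : k ∉ S) {g : MvPolynomial σ R}
    (hg : substOn a (insert k S) g ∈ (MvPolynomial σ R)⁰) {p : MvPolynomial σ R}
    (h : (X k - C (a k)) * p ∈ Ideal.span {g} ⊔ Ideal.span ((fun i => X i - C (a i)) '' S)) :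
    p ∈ Ideal.span {g} ⊔ Ideal.span ((fun i => X i - C (a i)) '' S) := by
  have hJ : Ideal.span ((fun i => X i - C (a i)) '' S) ≤ RingHom.ker (substOn a S).toRingHom :=
    Ideal.span_le.mpr fun _ ⟨i, hi, hp⟩ => hp ▸ substOn_X_sub_C_of_mem hi
  rw [Ideal.mem_sup_iff_apply_mem_map hJ (sub_substOn_mem_span a S)] at h ⊢
  rw [Ideal.map_span, Set.image_singleton] at h ⊢
  simp only [AlgHom.toRingHom_eq_coe, RingHom.coe_coe, map_mul, map_sub, substOn_C,
    substOn_X_of_notMem hk] at h ⊢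
  exact mem_span_singleton_of_X_sub_C_mul_mem a (by rwa [substOn_singleton_substOn]) h

theorem ker_mk_comp_eval (g : MvPolynomial σ R) :
    RingHom.ker ((Ideal.Quotient.mk (Ideal.span {eval a g})).comp (eval a)) =
      Ideal.span {g} ⊔ Ideal.span (Set.range fun i => X i - C (a i)) := by
  classical
  have hJ : Ideal.span (Set.range fun i => X i - C (a i)) ≤
      RingHom.ker (substOn a Set.univ).toRingHom :=
    Ideal.span_le.mpr fun _ ⟨i, hp⟩ => hp ▸ substOn_X_sub_C_of_mem (Set.mem_univ i)
  have hφ (p : MvPolynomial σ R) := Set.image_univ ▸ sub_substOn_mem_span a Set.univ p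
  ext p
  rw [Ideal.mem_sup_iff_apply_mem_map hJ hφ, RingHom.mem_ker, RingHom.comp_apply,
    Ideal.Quotient.eq_zero_iff_mem, Ideal.map_span, Set.image_singleton]
  simp only [substOn_univ, AlgHom.toRingHom_eq_coe, RingHom.coe_coe, Ideal.mem_span_singleton,
    C_dvd_iff_dvd_coeff, coeff_C]
  exact ⟨fun h i => by split_ifs <;> simp [h], fun h => by simpa using h 0⟩

noncomputable def quotientSpanXSubCEquiv (g : MvPolynomial σ R) :
    (MvPolynomial σ R ⧸ Ideal.span {g}) ⧸
        Ideal.span (Set.range fun i => Ideal.Quotient.mk (Ideal.span {g}) (X i - C (a i))) ≃+*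
      R ⧸ Ideal.span {eval a g} :=
  (Ideal.quotEquivOfEq (by rw [Ideal.map_span, ← Set.range_comp]; rfl)).trans <|
    (DoubleQuot.quotQuotEquivQuotSup _ _).trans <|
      (Ideal.quotEquivOfEq (ker_mk_comp_eval a g)).symm.trans <|
        RingHom.quotientKerEquivOfSurjective <|
          Ideal.Quotient.mk_surjective.comp fun r => ⟨C r, eval_C r⟩

variable [Fintype σ] {f : σ → R}

theorem substOn_sum_C_mul_X_mem_nonZeroDivisors {T : Set σ} {j : σ} (hj : j ∉ T)
    (hf : f j ∈ R⁰) : substOn a T (∑ i, C (f i) * X i) ∈ (MvPolynomial σ R)⁰ := by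
  classical
  rw [← Finset.add_sum_erase _ _ (Finset.mem_univ j), map_add, map_mul, substOn_C,
    substOn_X_of_notMem hj]
  refine C_mul_X_add_mem_nonZeroDivisors j hf (Nat.le_zero.mp ?_)
  rw [map_sum]
  refine (degreeOf_sum_le _ _ _).trans (Finset.sup_le fun i hi => ?_)
  rw [map_mul, substOn_C]
  refine (degreeOf_mul_le _ _ _).trans ?_
  by_cases hiT : i ∈ T
  · simp [substOn_X_of_mem hiT, degreeOf_C]
  · simp [substOn_X_of_notMem hiT, degreeOf_C,
      degreeOf_X_of_ne (Finset.ne_of_mem_erase hi).symm]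

theorem substOn_univ_sum_C_mul_X :
    substOn a Set.univ (∑ i, C (f i) * X i) = C (∑ i, a i * f i) := by
  simp [substOn_univ, mul_comm]

end MvPolynomial

theorem isWeaklyRegular_X_sub_C_quotient_span_sum_C_mul_X {R : Type*} [CommRing R] {m : ℕ}
    {f a : Fin (m + 1) → R}
    (hf : f (Fin.last m) ∈ R⁰) (hF : ∑ i, a i * f i ∈ R⁰) :
    RingTheory.Sequence.IsWeaklyRegular
      (MvPolynomial (Fin (m + 1)) R ⧸ Ideal.span {∑ i, C (f i) * X i})
      (List.ofFn fun i => Ideal.Quotient.mk (Ideal.span {∑ i, C (f i) * X i}) (X i - C (a i))) := by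
  rw [show (List.ofFn fun i => Ideal.Quotient.mk _ (X i - C (a i))) =
      (List.ofFn fun i => X i - C (a i)).map (Ideal.Quotient.mk _) from List.map_ofFn.symm,
    RingTheory.Sequence.isWeaklyRegular_map_mk_iff]
  intro n hn p
  rw [List.length_ofFn] at hn
  simp only [List.getElem_ofFn, Ideal.ofList_take_ofFn]
  refine mem_sup_of_X_sub_C_mul_mem a (k := ⟨n, hn⟩) (lt_irrefl n) ?_
  have hinsert : insert ⟨n, hn⟩ {i : Fin (m + 1) | (i : ℕ) < n} =
      {i : Fin (m + 1) | (i : ℕ) < n + 1} := by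
    ext i
    simp only [Set.mem_insert_iff, Set.mem_ofPred_eq, Fin.ext_iff]
    omega
  rw [hinsert]
  rcases Nat.lt_succ_iff_lt_or_eq.mp hn with hlt | rfl
  · exact substOn_sum_C_mul_X_mem_nonZeroDivisors a (j := Fin.last m)
      (by simp only [Set.mem_ofPred_eq, Fin.val_last]; omega) hf
  · rw [Set.eq_univ_of_forall (s := {i : Fin _ | (i : ℕ) < _}) Fin.is_lt,
      substOn_univ_sum_C_mul_X]
    exact C_mem_nonZeroDivisors hF

theorem regular_sequence_and_specialization_general
    (Q : Type*) [CommRing Q] [IsLocalRing Q] [IsNoetherianRing Q]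
    (c : ℕ) (f : Fin c → Q)
    (hf : RingTheory.Sequence.IsRegular Q (List.ofFn f))
    (a : Fin c → Q) (ha : ∃ i, IsUnit (a i)) :
    RingTheory.Sequence.IsRegular
      (MvPolynomial (Fin c) Q ⧸
        Ideal.span {(∑ i, MvPolynomial.C (f i) * MvPolynomial.X i : MvPolynomial (Fin c) Q)})
      (List.ofFn fun i =>
        Ideal.Quotient.mk
          (Ideal.span {(∑ i, MvPolynomial.C (f i) * MvPolynomial.X i : MvPolynomial (Fin c) Q)})
          (MvPolynomial.X i - MvPolynomial.C (a i))) ∧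
    Nonempty
      (((MvPolynomial (Fin c) Q ⧸
          Ideal.span {(∑ i, MvPolynomial.C (f i) * MvPolynomial.X i : MvPolynomial (Fin c) Q)}) ⧸
        Ideal.span (Set.range fun i =>
          Ideal.Quotient.mk
            (Ideal.span {(∑ i, MvPolynomial.C (f i) * MvPolynomial.X i : MvPolynomial (Fin c) Q)})
            (MvPolynomial.X i - MvPolynomial.C (a i)))) ≃+*
        (Q ⧸ Ideal.span {∑ i, a i * f i})) := by
  obtain ⟨j, hj⟩ := ha
  obtain ⟨m, rfl⟩ := Nat.exists_eq_add_one_of_ne_zero j.pos.ne'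
  have hlast : f (Fin.last m) ∈ Q⁰ :=
    (hf.isSMulRegular_of_mem (List.mem_ofFn.mpr ⟨Fin.last m, rfl⟩)).mem_nonZeroDivisors
  have hF : ∑ i, a i * f i ∈ Q⁰ :=
    (RingTheory.Sequence.isSMulRegular_sum_mul_of_isRegular_ofFn hf hj).mem_nonZeroDivisors
  have hFm : ∑ i, a i * f i ∈ maximalIdeal Q :=
    hf.ofList_le_maximalIdeal <| Ideal.sum_mem _ fun i _ =>
      Ideal.mul_mem_left _ _ (Ideal.subset_span (List.mem_ofFn.mpr ⟨i, rfl⟩))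
  have e := (quotientSpanXSubCEquiv a (∑ i, C (f i) * X i)).trans
    (Ideal.quotEquivOfEq (show Ideal.span {eval a (∑ i, C (f i) * X i)} =
      Ideal.span {∑ i, a i * f i} by simp [mul_comm]))
  refine ⟨⟨isWeaklyRegular_X_sub_C_quotient_span_sum_C_mul_X hlast hF, ?_⟩, ⟨e⟩⟩
  have : Nontrivial (Q ⧸ Ideal.span {∑ i, a i * f i}) :=
    Ideal.Quotient.nontrivial_iff.mpr (ne_top_of_le_ne_top (maximalIdeal.isMaximal Q).ne_top
      ((Ideal.span_singleton_le_iff_mem _).mpr hFm))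
  rw [Ideal.smul_eq_mul, Ideal.mul_top, ne_comm, ← Ideal.Quotient.nontrivial_iff,
    Ideal.ofList_ofFn]
  exact e.surjective.nontrivial

/-- Let `Q` be a regular local ring, `f₁, …, f_c` (`c ≥ 2`) a regular sequence in `Q`,
`R = Q[x₁, …, x_c]/(f₁x₁ + ⋯ + f_cx_c)` the generic hypersurface, and `a₁, …, a_c ∈ Q`
with at least one `aᵢ` a unit.  Then `x₁ − a₁, …, x_c − a_c` is a regular sequence in
`R`, and `R/(x₁ − a₁, …, x_c − a_c) ≅ Q/(a₁f₁ + ⋯ + a_cf_c)`. -/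
theorem regular_sequence_and_specialization
    (Q : Type*) [CommRing Q] [IsLocalRing Q] [IsNoetherianRing Q]
    (hQ : IsRegularLocal Q)
    (c : ℕ) (hc : 2 ≤ c) (f : Fin c → Q)
    (hf : RingTheory.Sequence.IsRegular Q (List.ofFn f))
    (a : Fin c → Q) (ha : ∃ i, IsUnit (a i)) :
    RingTheory.Sequence.IsRegular
      (MvPolynomial (Fin c) Q ⧸
        Ideal.span {(∑ i, MvPolynomial.C (f i) * MvPolynomial.X i : MvPolynomial (Fin c) Q)})
      (List.ofFn fun i =>
        Ideal.Quotient.mk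
          (Ideal.span {(∑ i, MvPolynomial.C (f i) * MvPolynomial.X i : MvPolynomial (Fin c) Q)})
          (MvPolynomial.X i - MvPolynomial.C (a i))) ∧
    Nonempty
      (((MvPolynomial (Fin c) Q ⧸
          Ideal.span {(∑ i, MvPolynomial.C (f i) * MvPolynomial.X i : MvPolynomial (Fin c) Q)}) ⧸
        Ideal.span (Set.range fun i =>
          Ideal.Quotient.mk
            (Ideal.span {(∑ i, MvPolynomial.C (f i) * MvPolynomial.X i : MvPolynomial (Fin c) Q)})
            (MvPolynomial.X i - MvPolynomial.C (a i)))) ≃+*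
        (Q ⧸ Ideal.span {∑ i, a i * f i})) :=
  regular_sequence_and_specialization_general Q c f hf a ha
end

section
/- Let C be a totally acyclic complex of finitely generated free modules over a Gorenstein local ring R, serving as a complete resolution of a finitely generated R-module M (i.e., C agrees with a free resolution of M in all degrees ≥ i for some i ≥ 0). Then C is contractible if and only if M has finite projective dimension over R. -/
/-!
An exact complex `C` of projectives is contractible iff all its cycle modules `Z_n = ker d_n` are
projective, iff every `Z_n` is a direct summand of `C_n` (because `C_n / Z_n ≅ Z_{n-1}`).
Total acyclicity propagates the latter downwards: if `Z_n` is a summand of `C_n`, then `Z_{n-1}` is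
finitely generated projective, and exactness of the dual complex says that every functional on
`Z_{n-1}` extends to `C_{n-1}`; splitting `Z_{n-1}` off some `R^m` and extending the coordinate
functionals gives a retraction `C_{n-1} → Z_{n-1}`. Hence `C` is contractible iff its cycles are
summands in all large degrees. There `C` agrees with the free resolution `F` of `M`, and for `k ≥ 1`
we have `Ext^{k+1}(M, -) = 0` iff `Z_k(F)` is a summand of `F_k`.
-/

open CategoryTheory Opposite

universe u

/-- A Gorenstein local ring: a commutative Noetherian local ring of finite injective
dimension over itself, expressed via eventual vanishing of `Ext^i(M, R)` for all
finitely generated modules `M`. -/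
def IsGorensteinLocal (R : Type u) [CommRing R] [IsLocalRing R] [IsNoetherianRing R] : Prop :=
  ∃ n : ℕ, ∀ M : ModuleCat.{u} R, Module.Finite R M →
    ∀ i : ℕ, n < i →
      Subsingleton (((Ext R (ModuleCat.{u} R) i).obj (op M)).obj (ModuleCat.of R R))

/-- A module `M` has finite projective dimension: `Ext^i(M, -)` vanishes for all
sufficiently large `i`. -/
def HasFiniteProjectiveDimension
    (R : Type u) [CommRing R] (M : ModuleCat.{u} R) : Prop :=
  ∃ n : ℕ, ∀ N : ModuleCat.{u} R, ∀ i : ℕ, n < i →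
    Subsingleton (((Ext R (ModuleCat.{u} R) i).obj (op M)).obj N)

namespace Submodule

variable {R X Y : Type*} [Ring R] [AddCommGroup X] [Module R X] [AddCommGroup Y] [Module R Y]

theorem isComplemented_iff_exists_retraction {p : Submodule R X} :
    IsComplemented p ↔ ∃ r : X →ₗ[R] p, r ∘ₗ p.subtype = LinearMap.id :=
  ⟨fun ⟨q, h⟩ => ⟨p.projectionOnto q h, p.projectionOnto_comp_subtype h⟩,
    fun ⟨_, hr⟩ => ⟨_, LinearMap.isCompl_of_proj (LinearMap.congr_fun hr)⟩⟩

theorem projective_iff_isComplemented_ker [Module.Projective R X] {f : X →ₗ[R] Y}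
    (hf : Function.Surjective f) : Module.Projective R Y ↔ IsComplemented (LinearMap.ker f) := by
  have hsplit :=
    ((LinearMap.exact_subtype_ker_map f).split_tfae (injective_subtype _) hf).out 0 1
  rw [isComplemented_iff_exists_retraction, ← hsplit]
  exact ⟨fun _ => Module.projective_lifting_property f LinearMap.id hf,
    fun ⟨l, hl⟩ => .of_split l f hl⟩

end Submodule

theorem Submodule.isComplemented_of_dualMap_surjective {R X : Type*} [CommRing R]
    [AddCommGroup X] [Module R X] {p : Submodule R X} [Module.Finite R p]
    [Module.Projective R p] (h : Function.Surjective p.subtype.dualMap) : IsComplemented p := by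
  obtain ⟨m, π, hπ⟩ := Module.Finite.exists_fin' R p
  obtain ⟨s, hs⟩ := Module.projective_lifting_property π LinearMap.id hπ
  choose θ hθ using fun j => h (LinearMap.proj j ∘ₗ s)
  refine isComplemented_iff_exists_retraction.2 ⟨π ∘ₗ LinearMap.pi θ, ?_⟩
  calc π ∘ₗ LinearMap.pi θ ∘ₗ p.subtype = π ∘ₗ s := by
        congr 1; ext z j; exact LinearMap.congr_fun (hθ j) z
    _ = LinearMap.id := hs

namespace ChainComplex

variable {R : Type u} [CommRing R] (C : ChainComplex (ModuleCat.{u} R) ℤ)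

theorem exactAt_iff_range_eq_ker {i j k : ℤ} (hij : i = j + 1) (hjk : j = k + 1) :
    C.ExactAt j ↔ LinearMap.range (C.d i j).hom = LinearMap.ker (C.d j k).hom := by
  rw [HomologicalComplex.exactAt_iff' C i j k (by simp [hij]) (by simp [hjk]),
    ShortComplex.moduleCat_exact_iff_range_eq_ker]
  rfl

abbrev cyclesSubmodule (n : ℤ) : Submodule R (C.X n) := LinearMap.ker (C.d n (n - 1)).hom

theorem d_mem_cyclesSubmodule (i j : ℤ) (x : C.X i) : C.d i j x ∈ C.cyclesSubmodule j := by
  simp [← ModuleCat.comp_apply]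

def toCyclesSubmodule (i j : ℤ) : C.X i →ₗ[R] C.cyclesSubmodule j :=
  (C.d i j).hom.codRestrict _ (C.d_mem_cyclesSubmodule i j)

@[simp]
theorem coe_toCyclesSubmodule_apply (i j : ℤ) (x : C.X i) :
    (C.toCyclesSubmodule i j x : C.X j) = C.d i j x := rfl

theorem toCyclesSubmodule_surjective {i j : ℤ} (hij : i = j + 1) (h : C.ExactAt j) :
    Function.Surjective (C.toCyclesSubmodule i j) := by
  intro z
  obtain ⟨y, hy⟩ : (z : C.X j) ∈ LinearMap.range (C.d i j).hom := by
    rw [(C.exactAt_iff_range_eq_ker hij (sub_add_cancel j 1).symm).1 h]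
    exact z.2
  exact ⟨y, Subtype.ext hy⟩

section Sections

variable {C} (σ : ∀ n, C.cyclesSubmodule n →ₗ[R] C.X (n + 1))

theorem d_sections_apply (hσ : ∀ n, C.toCyclesSubmodule (n + 1) n ∘ₗ σ n = LinearMap.id)
    (n : ℤ) (z : C.cyclesSubmodule (n - 1)) :
    C.d n (n - 1) ((C.XIsoOfEq (sub_add_cancel n 1)).hom (σ (n - 1) z)) = z := by
  rw [← ModuleCat.comp_apply, HomologicalComplex.XIsoOfEq_hom_comp_d]
  exact congrArg Subtype.val (LinearMap.congr_fun (hσ (n - 1)) z)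

def retractionOfSections (hσ : ∀ n, C.toCyclesSubmodule (n + 1) n ∘ₗ σ n = LinearMap.id)
    (n : ℤ) : C.X n →ₗ[R] C.cyclesSubmodule n :=
  LinearMap.codRestrict _ (LinearMap.id - (C.XIsoOfEq (sub_add_cancel n 1)).hom.hom ∘ₗ
      σ (n - 1) ∘ₗ C.toCyclesSubmodule n (n - 1))
    fun x => by simp [d_sections_apply σ hσ]

theorem retractionOfSections_apply_coe
    (hσ : ∀ n, C.toCyclesSubmodule (n + 1) n ∘ₗ σ n = LinearMap.id) {n : ℤ}
    (z : C.cyclesSubmodule n) : retractionOfSections σ hσ n z = z := by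
  ext
  simp [retractionOfSections, show C.toCyclesSubmodule n (n - 1) z = 0 from Subtype.ext z.2]

noncomputable def homotopyOfSections
    (hσ : ∀ n, C.toCyclesSubmodule (n + 1) n ∘ₗ σ n = LinearMap.id) : Homotopy (𝟙 C) 0 :=
  (Homotopy.ofEq <| by
    ext n : 1
    rw [Homotopy.nullHomotopicMap'_f (c := ComplexShape.down ℤ) (k₀ := n - 1) rfl (by simp)]
    ext x
    have hρ : retractionOfSections σ hσ (n - 1) ((C.d n (n - 1)).hom x) =
        C.toCyclesSubmodule n (n - 1) x :=
      retractionOfSections_apply_coe σ hσ (C.toCyclesSubmodule n (n - 1) x)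
    have hd : (C.d (n + 1) n).hom (σ n (retractionOfSections σ hσ n x)) =
        retractionOfSections σ hσ n x :=
      congrArg Subtype.val (LinearMap.congr_fun (hσ n) _)
    simp only [HomologicalComplex.id_f, ModuleCat.hom_add, LinearMap.add_apply,
      ModuleCat.hom_comp, LinearMap.comp_apply, ModuleCat.hom_ofHom,
      HomologicalComplex.XIsoOfEq_rfl, Iso.refl_hom, ModuleCat.hom_id, LinearMap.id_apply]
    rw [hρ, hd]
    simp [retractionOfSections]).trans
  (Homotopy.nullHomotopy' fun i j hij =>
    ModuleCat.ofHom (σ i ∘ₗ retractionOfSections σ hσ i) ≫ (C.XIsoOfEq hij).hom)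

end Sections

theorem exists_section_of_homotopy (h : Homotopy (𝟙 C) 0) (n : ℤ) :
    ∃ σ : C.cyclesSubmodule n →ₗ[R] C.X (n + 1),
      C.toCyclesSubmodule (n + 1) n ∘ₗ σ = LinearMap.id := by
  refine ⟨(h.hom n (n + 1)).hom ∘ₗ (C.cyclesSubmodule n).subtype, ?_⟩
  ext z
  have hcomm := congrArg (fun f => f.hom (z : C.X n)) (h.comm n)
  simp only [dNext_eq _ (show (ComplexShape.down ℤ).Rel n (n - 1) by simp),
    prevD_eq _ (show (ComplexShape.down ℤ).Rel (n + 1) n from rfl)] at hcomm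
  simpa [show (C.d n (n - 1)).hom z = 0 from z.2] using hcomm.symm

theorem exists_section_of_projective {n : ℤ} [Module.Projective R (C.cyclesSubmodule n)]
    (h : C.ExactAt n) : ∃ σ : C.cyclesSubmodule n →ₗ[R] C.X (n + 1),
      C.toCyclesSubmodule (n + 1) n ∘ₗ σ = LinearMap.id :=
  Module.projective_lifting_property _ _ (C.toCyclesSubmodule_surjective rfl h)

theorem nonempty_homotopy_id_zero_iff_forall_projective
    (hproj : ∀ n, Module.Projective R (C.X n)) (hexact : ∀ n, C.ExactAt n) :
    Nonempty (Homotopy (𝟙 C) 0) ↔ ∀ n, Module.Projective R (C.cyclesSubmodule n) := by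
  refine ⟨fun ⟨h⟩ n => ?_, fun h => ?_⟩
  · obtain ⟨σ, hσ⟩ := C.exists_section_of_homotopy h n
    exact .of_split σ _ hσ
  · choose σ hσ using fun n => C.exists_section_of_projective (hexact n)
    exact ⟨homotopyOfSections σ hσ⟩

theorem isComplemented_cyclesSubmodule_iff (n : ℤ) [Module.Projective R (C.X n)]
    (h : C.ExactAt (n - 1)) :
    IsComplemented (C.cyclesSubmodule n) ↔ Module.Projective R (C.cyclesSubmodule (n - 1)) := by
  rw [Submodule.projective_iff_isComplemented_ker (C.toCyclesSubmodule_surjective (by ring) h),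
    toCyclesSubmodule, LinearMap.ker_codRestrict]

theorem dualMap_subtype_cyclesSubmodule_surjective {n : ℤ} (h : C.ExactAt (n - 1))
    (hdual : Function.Exact (C.d n (n - 1)).hom.dualMap (C.d (n + 1) n).hom.dualMap) :
    Function.Surjective (C.cyclesSubmodule (n - 1)).subtype.dualMap := by
  intro φ
  have hsurj := C.toCyclesSubmodule_surjective (by ring) h
  obtain ⟨θ, hθ⟩ := (hdual (φ ∘ₗ C.toCyclesSubmodule n (n - 1))).1 <| by
    ext y
    simp [show C.toCyclesSubmodule n (n - 1) (C.d (n + 1) n y) = 0 from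
      Subtype.ext (by simp [← ModuleCat.comp_apply])]
  refine ⟨θ, ?_⟩
  ext z
  obtain ⟨y, rfl⟩ := hsurj z
  exact LinearMap.congr_fun hθ y

theorem isComplemented_cyclesSubmodule_sub_one (n : ℤ) [Module.Projective R (C.X n)]
    [Module.Finite R (C.X n)] (h : C.ExactAt (n - 1))
    (hdual : Function.Exact (C.d n (n - 1)).hom.dualMap (C.d (n + 1) n).hom.dualMap)
    (hn : IsComplemented (C.cyclesSubmodule n)) : IsComplemented (C.cyclesSubmodule (n - 1)) := by
  have := (C.isComplemented_cyclesSubmodule_iff n h).1 hn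
  have := Module.Finite.of_surjective _ (C.toCyclesSubmodule_surjective (by ring) h)
  exact Submodule.isComplemented_of_dualMap_surjective
    (C.dualMap_subtype_cyclesSubmodule_surjective h hdual)

theorem isComplemented_cyclesSubmodule_of_eventually (hproj : ∀ n, Module.Projective R (C.X n))
    (hfin : ∀ n, Module.Finite R (C.X n)) (hexact : ∀ n, C.ExactAt n)
    (hdual : ∀ n, Function.Exact (C.d n (n - 1)).hom.dualMap (C.d (n + 1) n).hom.dualMap)
    (h : ∀ᶠ n in Filter.atTop, IsComplemented (C.cyclesSubmodule n)) (n : ℤ) :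
    IsComplemented (C.cyclesSubmodule n) := by
  obtain ⟨i, hi⟩ := Filter.eventually_atTop.1 h
  rcases le_total i n with hin | hni
  · exact hi n hin
  · induction n, hni using Int.leInductionDown with
    | base => exact hi i le_rfl
    | pred m _ hm => exact C.isComplemented_cyclesSubmodule_sub_one m (hexact _) (hdual m) hm

theorem nonempty_homotopy_id_zero_iff_eventually_isComplemented
    (hproj : ∀ n, Module.Projective R (C.X n)) (hfin : ∀ n, Module.Finite R (C.X n))
    (hexact : ∀ n, C.ExactAt n)
    (hdual : ∀ n, Function.Exact (C.d n (n - 1)).hom.dualMap (C.d (n + 1) n).hom.dualMap) :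
    Nonempty (Homotopy (𝟙 C) 0) ↔
      ∀ᶠ n in Filter.atTop, IsComplemented (C.cyclesSubmodule n) := by
  rw [C.nonempty_homotopy_id_zero_iff_forall_projective hproj hexact]
  refine ⟨fun h => .of_forall fun n => (C.isComplemented_cyclesSubmodule_iff n (hexact _)).2 (h _),
    fun h n => ?_⟩
  have := (C.isComplemented_cyclesSubmodule_iff (n + 1) (hexact _)).1
    (C.isComplemented_cyclesSubmodule_of_eventually hproj hfin hexact hdual h (n + 1))
  rwa [add_sub_cancel_right] at this

end ChainComplex

theorem ModuleCat.isComplemented_iff_forall_exists_comp_eq {R : Type u} [CommRing R]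
    {X₀ X₁ X₂ : ModuleCat.{u} R} (d₁ : X₁ ⟶ X₀) (d₂ : X₂ ⟶ X₁) {p : Submodule R X₀}
    (h₁ : LinearMap.range d₁.hom = p) (h₂ : LinearMap.range d₂.hom = LinearMap.ker d₁.hom) :
    IsComplemented p ↔
      ∀ (N : ModuleCat.{u} R) (f : X₁ ⟶ N), d₂ ≫ f = 0 → ∃ g : X₀ ⟶ N, d₁ ≫ g = f := by
  let π : X₁ →ₗ[R] p := d₁.hom.codRestrict p fun x => h₁ ▸ LinearMap.mem_range_self _ x
  have hπ : Function.Surjective π := by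
    rintro ⟨z, hz⟩
    obtain ⟨y, rfl⟩ := h₁ ▸ hz
    exact ⟨y, rfl⟩
  have hexact : Function.Exact d₂.hom π := by
    rw [LinearMap.exact_iff, LinearMap.ker_codRestrict, h₂]
  rw [Submodule.isComplemented_iff_exists_retraction]
  constructor
  · rintro ⟨r, hr⟩ N f hf
    let f' : p →ₗ[R] N := (LinearMap.range d₂.hom).liftQ f.hom
      (LinearMap.range_le_ker_iff.2 (congrArg ModuleCat.Hom.hom hf)) ∘ₗ
        (hexact.linearEquivOfSurjective hπ).symm.toLinearMap
    refine ⟨ModuleCat.ofHom (f' ∘ₗ r), ?_⟩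
    ext x
    have hrx : r (d₁ x) = π x := LinearMap.congr_fun hr (π x)
    simp [hrx, f']
  · intro h
    obtain ⟨g, hg⟩ := h (ModuleCat.of R p) (ModuleCat.ofHom π) <| by
      ext x : 2
      exact hexact.apply_apply_eq_zero x
    refine ⟨g.hom, ?_⟩
    ext z
    obtain ⟨y, rfl⟩ := hπ z
    exact congrArg Subtype.val (LinearMap.congr_fun (congrArg ModuleCat.Hom.hom hg) y)

theorem CategoryTheory.ProjectiveResolution.subsingleton_ext_succ_iff {R : Type u} [CommRing R]
    {M : ModuleCat.{u} R} (P : ProjectiveResolution M) (k : ℕ) (N : ModuleCat.{u} R) :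
    Subsingleton (((Ext R (ModuleCat.{u} R) (k + 1)).obj (op M)).obj N) ↔
      ∀ f : P.complex.X (k + 1) ⟶ N, P.complex.d (k + 1 + 1) (k + 1) ≫ f = 0 →
        ∃ g : P.complex.X k ⟶ N, P.complex.d (k + 1) k ≫ g = f := by
  rw [← ModuleCat.isZero_iff_subsingleton, (P.isoExt (k + 1) N).isZero_iff,
    ← HomologicalComplex.exactAt_iff_isZero_homology,
    HomologicalComplex.exactAt_iff' _ k (k + 1) (k + 1 + 1) (by simp) (by simp),
    ShortComplex.moduleCat_exact_iff]
  rfl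

namespace ChainComplex

variable {R : Type u} [CommRing R] (F : ChainComplex (ModuleCat.{u} R) ℤ) {M : ModuleCat.{u} R}

def nonnegPart : ChainComplex (ModuleCat.{u} R) ℕ :=
  ChainComplex.of (fun n => F.X n) (fun n => F.d (n + 1 : ℕ) n) fun _ => F.d_comp_d _ _ _

theorem nonnegPart_d (n : ℕ) : F.nonnegPart.d (n + 1) n = F.d (n + 1 : ℕ) n := by
  simp [nonnegPart]

theorem nonnegPart_exactAt_succ (n : ℕ) (h : F.ExactAt (n + 1 : ℕ)) :
    F.nonnegPart.ExactAt (n + 1) := by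
  rw [HomologicalComplex.exactAt_iff' _ (n + 2) (n + 1) n (by simp) (by simp),
    ShortComplex.moduleCat_exact_iff_range_eq_ker]
  change LinearMap.range (F.nonnegPart.d (n + 2) (n + 1)).hom =
    LinearMap.ker (F.nonnegPart.d (n + 1) n).hom
  rw [nonnegPart_d, nonnegPart_d]
  exact (F.exactAt_iff_range_eq_ker (by push_cast; ring) (by push_cast; ring)).1 h

def augmentation (e : (F.X 0 ⧸ LinearMap.range (F.d 1 0).hom) ≃ₗ[R] M) : F.nonnegPart.X 0 ⟶ M :=
  ModuleCat.ofHom (e.toLinearMap ∘ₗ (LinearMap.range (F.d 1 0).hom).mkQ)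

theorem range_d_one_zero_eq_ker_augmentation
    (e : (F.X 0 ⧸ LinearMap.range (F.d 1 0).hom) ≃ₗ[R] M) :
    LinearMap.range (F.nonnegPart.d 1 0).hom = LinearMap.ker (F.augmentation e).hom := by
  change _ = LinearMap.ker (e.toLinearMap ∘ₗ (LinearMap.range (F.d 1 0).hom).mkQ)
  rw [LinearEquiv.ker_comp, Submodule.ker_mkQ, nonnegPart_d]
  rfl

theorem d_one_zero_comp_augmentation (e : (F.X 0 ⧸ LinearMap.range (F.d 1 0).hom) ≃ₗ[R] M) :
    F.nonnegPart.d 1 0 ≫ F.augmentation e = 0 := by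
  ext : 1
  exact LinearMap.range_le_ker_iff.1 (F.range_d_one_zero_eq_ker_augmentation e).le

noncomputable def projectiveResolution (hproj : ∀ n, Module.Projective R (F.X n))
    (hexact : ∀ n : ℤ, 0 < n → F.ExactAt n)
    (e : (F.X 0 ⧸ LinearMap.range (F.d 1 0).hom) ≃ₗ[R] M) : ProjectiveResolution M where
  complex := F.nonnegPart
  projective n := inferInstanceAs (Projective (F.X n))
  π := (ChainComplex.toSingle₀Equiv _ _).symm ⟨F.augmentation e, F.d_one_zero_comp_augmentation e⟩
  quasiIso := ⟨fun n => by
    cases n with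
    | zero =>
      rw [ChainComplex.quasiIsoAt₀_iff, ShortComplex.quasiIso_iff_of_zeros' _ rfl rfl rfl]
      constructor
      · change (ShortComplex.mk _ _ (F.d_one_zero_comp_augmentation e)).Exact
        rw [ShortComplex.moduleCat_exact_iff_range_eq_ker]
        exact F.range_d_one_zero_eq_ker_augmentation e
      · change Epi (F.augmentation e)
        rw [ModuleCat.epi_iff_surjective]
        exact e.surjective.comp (LinearMap.range (F.d 1 0).hom).mkQ_surjective
    | succ n =>
      rw [quasiIsoAt_iff_exactAt' _ _ (ChainComplex.exactAt_succ_single_obj _ _)]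
      exact F.nonnegPart_exactAt_succ n (hexact _ (by omega))⟩

theorem forall_subsingleton_ext_succ_iff_isComplemented (hproj : ∀ n, Module.Projective R (F.X n))
    (hexact : ∀ n : ℤ, 0 < n → F.ExactAt n)
    (e : (F.X 0 ⧸ LinearMap.range (F.d 1 0).hom) ≃ₗ[R] M) {k : ℕ} (hk : 1 ≤ k) :
    (∀ N : ModuleCat.{u} R, Subsingleton (((Ext R (ModuleCat.{u} R) (k + 1)).obj (op M)).obj N)) ↔
      IsComplemented (F.cyclesSubmodule k) := by
  simp only [(F.projectiveResolution hproj hexact e).subsingleton_ext_succ_iff,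
    projectiveResolution, nonnegPart_d]
  refine (ModuleCat.isComplemented_iff_forall_exists_comp_eq _ _ ?_ ?_).symm
  · exact (F.exactAt_iff_range_eq_ker (by push_cast; ring) (by ring)).1 (hexact k (by omega))
  · exact (F.exactAt_iff_range_eq_ker (by push_cast; ring) (by push_cast; ring)).1
      (hexact _ (by omega))

theorem hasFiniteProjectiveDimension_iff_eventually_isComplemented
    (hproj : ∀ n, Module.Projective R (F.X n)) (hexact : ∀ n : ℤ, 0 < n → F.ExactAt n)
    (e : (F.X 0 ⧸ LinearMap.range (F.d 1 0).hom) ≃ₗ[R] M) :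
    HasFiniteProjectiveDimension R M ↔
      ∀ᶠ n in Filter.atTop, IsComplemented (F.cyclesSubmodule n) := by
  rw [Filter.eventually_atTop]
  constructor
  · rintro ⟨n₀, h⟩
    refine ⟨n₀ + 1, fun n hn => ?_⟩
    lift n to ℕ using by omega
    exact (F.forall_subsingleton_ext_succ_iff_isComplemented hproj hexact e (by omega)).1
      fun N => h N _ (by omega)
  · rintro ⟨i, h⟩
    refine ⟨(max i 1).toNat, fun N j hj => ?_⟩
    obtain ⟨k, rfl⟩ : ∃ k, j = k + 1 := ⟨j - 1, by omega⟩
    exact (F.forall_subsingleton_ext_succ_iff_isComplemented hproj hexact e (by omega)).2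
      (h k (by omega)) N

end ChainComplex

theorem ModuleCat.isComplemented_ker_congr {R : Type u} [CommRing R]
    {A B A' B' : ModuleCat.{u} R} (f : A ⟶ B) (g : A' ⟶ B') (hA : A = A') (hB : B = B')
    (h : HEq f g) :
    IsComplemented (LinearMap.ker f.hom) ↔ IsComplemented (LinearMap.ker g.hom) := by
  subst hA hB
  rw [eq_of_heq h]

theorem complete_resolution_contractible_iff_finite_projdim_general
    {R : Type u} [CommRing R]
    (M : ModuleCat.{u} R)
    (C : ChainComplex (ModuleCat.{u} R) ℤ)
    (hfreeC : ∀ n : ℤ, Module.Free R (C.X n))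
    (hfinC : ∀ n : ℤ, Module.Finite R (C.X n))
    (hexactC : ∀ n : ℤ, C.ExactAt n)
    (hdualC : ∀ n : ℤ,
      Function.Exact (((C.d n (n - 1)).hom : _ →ₗ[R] _).dualMap)
        (((C.d (n + 1) n).hom : _ →ₗ[R] _).dualMap))
    -- `F` is a free resolution of `M` by finitely generated free modules
    (F : ChainComplex (ModuleCat.{u} R) ℤ)
    (hfreeF : ∀ n : ℤ, Module.Free R (F.X n))
    (hFexact : ∀ n : ℤ, n ≠ 0 → F.ExactAt n)
    (hF0 : Nonempty ((↥(F.X 0) ⧸ LinearMap.range ((F.d 1 0).hom : _ →ₗ[R] _)) ≃ₗ[R] M))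
    -- `C` agrees with `F` in all degrees `≥ i` for some `i ≥ 0`
    (hagree : ∃ i : ℤ, 0 ≤ i ∧ (∀ n ≥ i, C.X n = F.X n) ∧
      ∀ n ≥ i, HEq (C.d (n + 1) n) (F.d (n + 1) n)) :
    Nonempty (Homotopy (𝟙 C) 0) ↔ HasFiniteProjectiveDimension R M := by
  obtain ⟨i, -, hX, hd⟩ := hagree
  rw [C.nonempty_homotopy_id_zero_iff_eventually_isComplemented
      (fun n => have := hfreeC n; inferInstance) hfinC hexactC hdualC,
    F.hasFiniteProjectiveDimension_iff_eventually_isComplemented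
      (fun n => have := hfreeF n; inferInstance) (fun n hn => hFexact n hn.ne') hF0.some]
  refine Filter.eventually_congr ((Filter.eventually_ge_atTop (i + 1)).mono fun n hn => ?_)
  have hdn := hd (n - 1) (by omega)
  rw [sub_add_cancel] at hdn
  exact ModuleCat.isComplemented_ker_congr _ _ (hX n (by omega)) (hX (n - 1) (by omega)) hdn

/-- Let `C` be a totally acyclic complex of finitely generated free modules over a
Gorenstein Noetherian local ring `R`, which is a complete resolution of a finitely
generated `R`-module `M`, i.e. `C` agrees with a free resolution `F` of `M` in all
degrees `≥ i` for some `i ≥ 0`.  Then `C` is contractible if and only if `M` has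
finite projective dimension over `R`. -/
theorem complete_resolution_contractible_iff_finite_projdim
    {R : Type u} [CommRing R] [IsLocalRing R] [IsNoetherianRing R]
    (hGor : IsGorensteinLocal R)
    (M : ModuleCat.{u} R) (hM : Module.Finite R M)
    (C : ChainComplex (ModuleCat.{u} R) ℤ)
    (hfreeC : ∀ n : ℤ, Module.Free R (C.X n))
    (hfinC : ∀ n : ℤ, Module.Finite R (C.X n))
    (hexactC : ∀ n : ℤ, C.ExactAt n)
    (hdualC : ∀ n : ℤ,
      Function.Exact (((C.d n (n - 1)).hom : _ →ₗ[R] _).dualMap)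
        (((C.d (n + 1) n).hom : _ →ₗ[R] _).dualMap))
    -- `F` is a free resolution of `M` by finitely generated free modules
    (F : ChainComplex (ModuleCat.{u} R) ℤ)
    (hfreeF : ∀ n : ℤ, Module.Free R (F.X n))
    (hfinF : ∀ n : ℤ, Module.Finite R (F.X n))
    (hFneg : ∀ n : ℤ, n < 0 → Subsingleton (F.X n))
    (hFexact : ∀ n : ℤ, n ≠ 0 → F.ExactAt n)
    (hF0 : Nonempty ((↥(F.X 0) ⧸ LinearMap.range ((F.d 1 0).hom : _ →ₗ[R] _)) ≃ₗ[R] M))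
    -- `C` agrees with `F` in all degrees `≥ i` for some `i ≥ 0`
    (hagree : ∃ i : ℤ, 0 ≤ i ∧ (∀ n ≥ i, C.X n = F.X n) ∧
      ∀ n ≥ i, HEq (C.d (n + 1) n) (F.d (n + 1) n)) :
    Nonempty (Homotopy (𝟙 C) 0) ↔ HasFiniteProjectiveDimension R M :=
  complete_resolution_contractible_iff_finite_projdim_general M C hfreeC hfinC hexactC hdualC F
    hfreeF hFexact hF0 hagree
end
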